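/- Let F = (G + r₁) − (H + r₂) where H is ρ_H-strongly convex and differentiable, r₂ is ρ_{r₂}-strongly convex, G + r₁ is ρ_{G+r₁}-strongly convex, and set ρ = ρ_H + ρ_{r₂} + ρ_{G+r₁}. Suppose g + w ∈ ∂(G+r₁)(x⁺) where w ∈ ∂r₂(x). Then for any γ ∈ (0, ρ): F(x⁺) ≤ F(x) + (1/(2γ))‖g − ∇H(x)‖² − ((ρ − γ)/2)‖x⁺ − x‖². -/

import Mathlib

open RealInnerProductSpace

/-- Subdifferential of a function `f` at `x`. -/
def subdiff {n : ℕ} (f : EuclideanSpace ℝ (Fin n) → ℝ) (x : EuclideanSpace ℝ (Fin n)) :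
    Set (EuclideanSpace ℝ (Fin n)) :=
  {v | ∀ y, f x + ⟪v, y - x⟫ ≤ f y}

/-!
Each of the three strongly convex pieces `G + r₁`, `r₂`, `H` lies above its linearisation
(at `x⁺` through the subgradient `g + w`, at `x` through `w`, at `x` through `∇H(x)`) plus
`ρ/2 ‖x⁺ - x‖²` with its own modulus. Adding the three bounds, the `w`-terms cancel and
`F(x⁺) ≤ F(x) + ⟪g - ∇H(x), x⁺ - x⟫ - ρ/2 ‖x⁺ - x‖²`; Young's inequality with weight `γ`
bounds the remaining inner product.

Both linearisation bounds come from the chord inequality of strong convexity on `[x, y]`: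
the slope of the chord dominates the subgradient pairing, resp. tends to the directional
derivative, and letting the chord shrink recovers the full modulus.
-/

open Set Filter Topology

section InnerProductSpace

variable {E : Type*} [NormedAddCommGroup E] [InnerProductSpace ℝ E] {f : E → ℝ} {μ : ℝ}

lemma StrongConvexOn.slope_le (hf : StrongConvexOn univ μ f) (x y : E) {t : ℝ}
    (ht : t ∈ Ioo 0 1) :
    slope (fun s : ℝ => f (x + s • (y - x))) 0 t
      ≤ f y - f x - (1 - t) * (μ / 2 * ‖y - x‖ ^ 2) := by
  have hchord := hf.2 (mem_univ y) (mem_univ x) ht.1.le (sub_nonneg.2 ht.2.le)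
    (add_sub_cancel t 1)
  have hpoint : t • y + (1 - t) • x = x + t • (y - x) := by module
  rw [hpoint, smul_eq_mul, smul_eq_mul] at hchord
  rw [slope_def_field, zero_smul, add_zero, sub_zero, div_le_iff₀ ht.1]
  linarith

lemma StrongConvexOn.add_add_le_of_tendsto_le_slope (hf : StrongConvexOn univ μ f)
    {x y : E} {c : ℝ → ℝ} {d : ℝ} (hc : Tendsto c (𝓝[>] 0) (𝓝 d))
    (hle : ∀ᶠ t in 𝓝[>] 0, c t ≤ slope (fun s : ℝ => f (x + s • (y - x))) 0 t) :
    f x + d + μ / 2 * ‖y - x‖ ^ 2 ≤ f y := by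
  have hbound : Tendsto (fun t : ℝ => f y - f x - (1 - t) * (μ / 2 * ‖y - x‖ ^ 2))
      (𝓝[>] 0) (𝓝 (f y - f x - μ / 2 * ‖y - x‖ ^ 2)) := by
    have hcont : Continuous fun t : ℝ => f y - f x - (1 - t) * (μ / 2 * ‖y - x‖ ^ 2) := by
      fun_prop
    simpa using (hcont.tendsto 0).mono_left nhdsWithin_le_nhds
  have hchord : ∀ᶠ t in 𝓝[>] 0, c t ≤ f y - f x - (1 - t) * (μ / 2 * ‖y - x‖ ^ 2) := by
    filter_upwards [hle, Ioo_mem_nhdsGT one_pos] with t hct ht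
    exact hct.trans (hf.slope_le x y ht)
  linarith [le_of_tendsto_of_tendsto hc hbound hchord]

lemma StrongConvexOn.add_inner_add_le_of_forall_le (hf : StrongConvexOn univ μ f) {v x : E}
    (hv : ∀ z, f x + ⟪v, z - x⟫ ≤ f z) (y : E) :
    f x + ⟪v, y - x⟫ + μ / 2 * ‖y - x‖ ^ 2 ≤ f y := by
  refine hf.add_add_le_of_tendsto_le_slope tendsto_const_nhds ?_
  filter_upwards [self_mem_nhdsWithin] with t (ht : 0 < t)
  have hsub := hv (x + t • (y - x))
  rw [add_sub_cancel_left, inner_smul_right] at hsub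
  rw [slope_def_field, zero_smul, add_zero, sub_zero, le_div_iff₀ ht]
  linarith

lemma StrongConvexOn.add_inner_add_le_of_hasGradientAt (hf : StrongConvexOn univ μ f)
    [CompleteSpace E] {v x : E} (hv : HasGradientAt f v x) (y : E) :
    f x + ⟪v, y - x⟫ + μ / 2 * ‖y - x‖ ^ 2 ≤ f y := by
  have hline : HasDerivAt (fun s : ℝ => x + s • (y - x)) (y - x) 0 := by
    simpa using ((hasDerivAt_id (0 : ℝ)).smul_const (y - x)).const_add x
  have hderiv : HasDerivAt (fun s : ℝ => f (x + s • (y - x))) ⟪v, y - x⟫ 0 := by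
    have hv' : HasFDerivAt f (InnerProductSpace.toDual ℝ E v) (x + (0 : ℝ) • (y - x)) := by
      simpa using hv.hasFDerivAt
    have hcomp := hv'.comp_hasDerivAt 0 hline
    rwa [InnerProductSpace.toDual_apply_apply] at hcomp
  refine hf.add_add_le_of_tendsto_le_slope ?_ (Eventually.of_forall fun _ => le_rfl)
  exact hderiv.tendsto_slope_zero_right
    |>.congr fun t => by simp [slope_def_field, div_eq_inv_mul]

lemma real_inner_le_young (a b : E) {γ : ℝ} (hγ : 0 < γ) :
    ⟪a, b⟫ ≤ 1 / (2 * γ) * ‖a‖ ^ 2 + γ / 2 * ‖b‖ ^ 2 := by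
  have hsq : 0 ≤ ‖a - γ • b‖ ^ 2 := sq_nonneg _
  rw [norm_sub_sq_real, inner_smul_right, norm_smul, Real.norm_of_nonneg hγ.le] at hsq
  rw [div_mul_eq_mul_div, one_mul, div_add' _ _ _ (by positivity), le_div_iff₀ (by positivity)]
  nlinarith

end InnerProductSpace

theorem dca_page_template_inequality_nonsmooth_general
    {n : ℕ}
    (G r₁ H r₂ F : EuclideanSpace ℝ (Fin n) → ℝ)
    (H' : EuclideanSpace ℝ (Fin n) → EuclideanSpace ℝ (Fin n))
    (ρH ρr₂ ρGr₁ ρ γ : ℝ)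
    (g w x xplus : EuclideanSpace ℝ (Fin n))
    (hHdiff : ∀ y, HasGradientAt H (H' y) y)
    (hHsc : StrongConvexOn Set.univ ρH H)
    (hr₂sc : StrongConvexOn Set.univ ρr₂ r₂)
    (hGr₁sc : StrongConvexOn Set.univ ρGr₁ (fun y => G y + r₁ y))
    (hρ : ρ = ρH + ρr₂ + ρGr₁)
    (hF : ∀ y, F y = G y + r₁ y - (H y + r₂ y))
    (hw : w ∈ subdiff r₂ x)
    (hsub : g + w ∈ subdiff (fun y => G y + r₁ y) xplus)
    (hγ : γ ∈ Set.Ioo 0 ρ) :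
    F xplus ≤ F x + (1 / (2 * γ)) * ‖g - H' x‖ ^ 2 - ((ρ - γ) / 2) * ‖xplus - x‖ ^ 2 := by
  have hGr₁ := hGr₁sc.add_inner_add_le_of_forall_le hsub x
  have hr₂ := hr₂sc.add_inner_add_le_of_forall_le hw xplus
  have hH := hHsc.add_inner_add_le_of_hasGradientAt (hHdiff x) xplus
  have hyoung := real_inner_le_young (g - H' x) (xplus - x) hγ.1
  rw [← neg_sub xplus x, inner_neg_right, norm_neg, inner_add_left] at hGr₁
  rw [inner_sub_left] at hyoung
  rw [hF, hF, hρ]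
  linarith

/-- Template descent inequality for DCA-PAGE without smoothness of r₂. -/
theorem dca_page_template_inequality_nonsmooth
    {n : ℕ}
    (G r₁ H r₂ F : EuclideanSpace ℝ (Fin n) → ℝ)
    (H' : EuclideanSpace ℝ (Fin n) → EuclideanSpace ℝ (Fin n))
    (ρH ρr₂ ρGr₁ ρ γ : ℝ)
    (g w x xplus : EuclideanSpace ℝ (Fin n))
    (hGconv : ConvexOn ℝ Set.univ G) (hr₁conv : ConvexOn ℝ Set.univ r₁)
    (hGlsc : LowerSemicontinuous G) (hr₁lsc : LowerSemicontinuous r₁)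
    (hr₂lsc : LowerSemicontinuous r₂)
    (hHdiff : ∀ y, HasGradientAt H (H' y) y)
    (hHsc : StrongConvexOn Set.univ ρH H)
    (hr₂sc : StrongConvexOn Set.univ ρr₂ r₂)
    (hGr₁sc : StrongConvexOn Set.univ ρGr₁ (fun y => G y + r₁ y))
    (hρ : ρ = ρH + ρr₂ + ρGr₁)
    (hF : ∀ y, F y = G y + r₁ y - (H y + r₂ y))
    (hw : w ∈ subdiff r₂ x)
    (hsub : g + w ∈ subdiff (fun y => G y + r₁ y) xplus)
    (hγ : γ ∈ Set.Ioo 0 ρ) :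
    F xplus ≤ F x + (1 / (2 * γ)) * ‖g - H' x‖ ^ 2 - ((ρ - γ) / 2) * ‖xplus - x‖ ^ 2 :=
  dca_page_template_inequality_nonsmooth_general G r₁ H r₂ F H' ρH ρr₂ ρGr₁ ρ γ g w x xplus hHdiff
    hHsc hr₂sc hGr₁sc hρ hF hw hsub hγ
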